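/- Let K, L ≥ 1 and s < t be real numbers with |ln(K/L)| < (t-s)/2. Then for all x ∈ ℝ, |(1/(t-s))·ln( K·√(L² + (1-L²)cos²x) / (L·√(K² + (1-K²)cos²x)) )| < 1/2. -/
import Mathlib


open Real

set_option maxHeartbeats 1000000

theorem stmt_2 (K L s t : ℝ) (hK : 1 ≤ K) (hL : 1 ≤ L) (hst : s < t)
    (h : |Real.log (K / L)| < (t - s) / 2) (x : ℝ) :
    |(1 / (t - s)) * Real.log (K * Real.sqrt (L^2 + (1 - L^2) * (Real.cos x)^2) /
      (L * Real.sqrt (K^2 + (1 - K^2) * (Real.cos x)^2)))| < 1 / 2 := by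
  have ht : 0 < t - s := sub_pos.mpr hst
  set c := (Real.cos x) ^ 2 with hc
  have hc0 : 0 ≤ c := sq_nonneg _
  have hc1 : c ≤ 1 := by
    have h1 := Real.neg_one_le_cos x
    have h2 := Real.cos_le_one x
    nlinarith
  have hK0 : (0:ℝ) < K := lt_of_lt_of_le one_pos hK
  have hL0 : (0:ℝ) < L := lt_of_lt_of_le one_pos hL
  have hK2 : (1:ℝ) ≤ K^2 := by nlinarith
  have hL2 : (1:ℝ) ≤ L^2 := by nlinarith
  have hBK1 : (1:ℝ) ≤ K^2 + (1 - K^2) * c := by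
    nlinarith [mul_nonneg (by linarith : (0:ℝ) ≤ K^2 - 1) (by linarith : (0:ℝ) ≤ 1 - c)]
  have hBL1 : (1:ℝ) ≤ L^2 + (1 - L^2) * c := by
    nlinarith [mul_nonneg (by linarith : (0:ℝ) ≤ L^2 - 1) (by linarith : (0:ℝ) ≤ 1 - c)]
  have hBK0 : (0:ℝ) < K^2 + (1 - K^2) * c := by linarith
  have hBL0 : (0:ℝ) < L^2 + (1 - L^2) * c := by linarith
  set BK := K^2 + (1 - K^2) * c with hBKdef
  set BL := L^2 + (1 - L^2) * c with hBLdef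
  have hsK : (0:ℝ) < Real.sqrt BK := Real.sqrt_pos.mpr hBK0
  have hsL : (0:ℝ) < Real.sqrt BL := Real.sqrt_pos.mpr hBL0
  have hlog : Real.log (K * Real.sqrt BL / (L * Real.sqrt BK))
      = Real.log K + (1/2) * Real.log BL - (Real.log L + (1/2) * Real.log BK) := by
    rw [Real.log_div (by positivity) (by positivity), Real.log_mul hK0.ne' hsL.ne',
      Real.log_mul hL0.ne' hsK.ne', Real.log_sqrt hBL0.le, Real.log_sqrt hBK0.le]
    ring
  have key : |Real.log K + 1/2 * Real.log BL - (Real.log L + 1/2 * Real.log BK)|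
      ≤ |Real.log (K / L)| := by
    rw [Real.log_div hK0.ne' hL0.ne']
    rcases le_total L K with hKL | hKL
    · have h1 : Real.log L ≤ Real.log K := Real.log_le_log hL0 hKL
      have hKL2 : L^2 ≤ K^2 := pow_le_pow_left₀ hL0.le hKL 2
      have h2 : Real.log BL ≤ Real.log BK := Real.log_le_log hBL0 (by
        rw [hBKdef, hBLdef]
        nlinarith [mul_nonneg (by linarith : (0:ℝ) ≤ K^2 - L^2) (by linarith : (0:ℝ) ≤ 1 - c)])
      have h3 : Real.log (BK * L^2) ≤ Real.log (BL * K^2) :=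
        Real.log_le_log (by positivity) (by
          rw [hBKdef, hBLdef]
          nlinarith [mul_nonneg hc0 (by linarith : (0:ℝ) ≤ K^2 - L^2)])
      rw [Real.log_mul hBK0.ne' (by positivity), Real.log_mul hBL0.ne' (by positivity),
        Real.log_pow, Real.log_pow] at h3
      push_cast at h3
      rw [abs_of_nonneg (by linarith), abs_of_nonneg (by linarith)]
      linarith
    · have h1 : Real.log K ≤ Real.log L := Real.log_le_log hK0 hKL
      have hKL2 : K^2 ≤ L^2 := pow_le_pow_left₀ hK0.le hKL 2
      have h2 : Real.log BK ≤ Real.log BL := Real.log_le_log hBK0 (by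
        rw [hBKdef, hBLdef]
        nlinarith [mul_nonneg (by linarith : (0:ℝ) ≤ L^2 - K^2) (by linarith : (0:ℝ) ≤ 1 - c)])
      have h3 : Real.log (BL * K^2) ≤ Real.log (BK * L^2) :=
        Real.log_le_log (by positivity) (by
          rw [hBLdef, hBKdef]
          nlinarith [mul_nonneg hc0 (by linarith : (0:ℝ) ≤ L^2 - K^2)])
      rw [Real.log_mul hBL0.ne' (by positivity), Real.log_mul hBK0.ne' (by positivity),
        Real.log_pow, Real.log_pow] at h3
      push_cast at h3
      rw [abs_of_nonpos (by linarith), abs_of_nonpos (by linarith)]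
      linarith
  rw [hlog, abs_mul, abs_of_pos (by positivity : (0:ℝ) < 1 / (t - s))]
  have hfin : |Real.log (K / L)| < (t - s) / 2 := h
  calc 1 / (t - s) * |Real.log K + 1 / 2 * Real.log BL - (Real.log L + 1 / 2 * Real.log BK)|
      ≤ 1 / (t - s) * |Real.log (K / L)| := by gcongr
    _ < 1 / (t - s) * ((t - s) / 2) := by gcongr
    _ = 1 / 2 := by field_simp
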